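/- For every δ ∈ (0,1) there exists a constant C > 0, depending only on δ, such that for all B ≥ 2 and all n ≥ 1 (with N = nB), with probability at least 1 − δ the maximum calibration error satisfies MCE ≤ C·√(B·log B / N); that is, MCE converges to zero at rate O(√(B log B / N)). -/

import Mathlib

/-! Hoeffding's inequality bounds the probability that a bin estimate `θ̂_t` is `ε` away from
`θ_t` by `2 exp (-2 n ε²)`, so by a union bound over the `B` input bins all estimates are
within `ε = √(log (2B/δ) / (2n))` of their means with probability at least `1 - δ`.
Each `o_j - e_j` is a weighted average of the `θ_t - θ̂_t`, so then `MCE < ε`, and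
`ε ≤ C √(log B / n)` for `C² = 1 + log (2/δ) / log 2` because `log B ≥ log 2`. -/

open MeasureTheory ProbabilityTheory Finset

/-- Empirical estimate of input bin `t`: the average of the `n` samples in that bin. -/
noncomputable def binEst {Ω : Type*} {B n : ℕ} (X : Fin B × Fin n → Ω → ℝ)
    (t : Fin B) (ω : Ω) : ℝ :=
  (n : ℝ)⁻¹ * ∑ s : Fin n, X (t, s) ω

/-- Weighted average of the values `v t` over the input bins mapped to output bin `j`. -/
noncomputable def binAvg {B J : ℕ} (g : Fin B → Fin J) (α : Fin B → ℝ)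
    (v : Fin B → ℝ) (j : Fin J) : ℝ :=
  (∑ t ∈ univ.filter (fun t => g t = j), α t * v t) /
    (∑ t ∈ univ.filter (fun t => g t = j), α t)

/-- Maximum calibration error: the largest deviation, over output bins `j`, between the
weighted average `o_j` of the true bin values and the weighted average `e_j` of the
empirical bin estimates. -/
noncomputable def MCE {Ω : Type*} {B n J : ℕ} (g : Fin B → Fin J) (α θ : Fin B → ℝ)
    (X : Fin B × Fin n → Ω → ℝ) (ω : Ω) : ℝ :=
  ⨆ j : Fin J, |binAvg g α θ j - binAvg g α (fun t => binEst X t ω) j|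

open Real

lemma abs_binAvg_sub_binAvg_le {B J : ℕ} (g : Fin B → Fin J) {α : Fin B → ℝ}
    (hα : ∀ t, 0 ≤ α t) {u v : Fin B → ℝ} {c : ℝ} (hc : 0 ≤ c) (h : ∀ t, |u t - v t| ≤ c)
    (j : Fin J) : |binAvg g α u j - binAvg g α v j| ≤ c := by
  rw [binAvg, binAvg]
  set F := univ.filter fun t => g t = j
  rcases (sum_nonneg fun t _ => hα t : 0 ≤ ∑ t ∈ F, α t).eq_or_lt with hA | hA
  · -- zero total weight: both averages are `x / 0 = 0`
    simpa [← hA] using hc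
  rw [div_sub_div_same, abs_div, abs_of_pos hA, div_le_iff₀ hA, ← sum_sub_distrib]
  calc |∑ t ∈ F, (α t * u t - α t * v t)| ≤ ∑ t ∈ F, |α t * (u t - v t)| := by
        simpa only [mul_sub] using abs_sum_le_sum_abs _ _
    _ ≤ ∑ t ∈ F, c * α t := sum_le_sum fun t _ => by
        rw [abs_mul, abs_of_nonneg (hα t), mul_comm]
        exact mul_le_mul_of_nonneg_right (h t) (hα t)
    _ = c * ∑ t ∈ F, α t := (mul_sum _ _ _).symm

lemma MCE_le {Ω : Type*} {B n J : ℕ} (g : Fin B → Fin J) {α : Fin B → ℝ} (hα : ∀ t, 0 ≤ α t)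
    (θ : Fin B → ℝ) (X : Fin B × Fin n → Ω → ℝ) (ω : Ω) {c : ℝ} (hc : 0 ≤ c)
    (h : ∀ t, |θ t - binEst X t ω| ≤ c) : MCE g α θ X ω ≤ c :=
  Real.iSup_le (abs_binAvg_sub_binAvg_le g hα hc h) hc

section Hoeffding

variable {Ω : Type*} [MeasurableSpace Ω] {μ : Measure Ω} [IsProbabilityMeasure μ]

lemma measureReal_le_abs_sum_sub_integral_le_of_iIndepFun {ι : Type*} {X : ι → Ω → ℝ}
    (hind : iIndepFun X μ) (hXm : ∀ i, Measurable (X i)) {a b : ℝ}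
    (hX : ∀ i, ∀ᵐ ω ∂μ, X i ω ∈ Set.Icc a b)
    (s : Finset ι) {ε : ℝ} (hε : 0 ≤ ε) :
    μ.real {ω | ε ≤ |∑ i ∈ s, (X i ω - μ[X i])|} ≤
      2 * exp (-2 * ε ^ 2 / (#s * (b - a) ^ 2)) := by
  have hsub : ∀ i, HasSubgaussianMGF (fun ω => X i ω - μ[X i]) ((‖b - a‖₊ / 2) ^ 2) μ :=
    fun i => hasSubgaussianMGF_of_mem_Icc (hXm i).aemeasurable (hX i)
  have hcent : iIndepFun (fun i ω => X i ω - μ[X i]) μ := by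
    exact hind.comp (fun i x => x - μ[X i]) fun i => measurable_id.sub_const _
  have hneg : iIndepFun (fun i ω => -(X i ω - μ[X i])) μ := by
    exact hcent.comp (fun _ x => -x) fun _ => measurable_neg
  have hupper := HasSubgaussianMGF.measure_sum_ge_le_of_iIndepFun (s := s) hcent
    (fun i _ => hsub i) hε
  have hlower := HasSubgaussianMGF.measure_sum_ge_le_of_iIndepFun (s := s) hneg
    (fun i _ => (hsub i).neg) hε
  have hparam : -ε ^ 2 / (2 * ∑ i ∈ s, ((‖b - a‖₊ / 2) ^ 2 : NNReal)) =
      -2 * ε ^ 2 / (#s * (b - a) ^ 2) := by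
    rw [sum_const, nsmul_eq_mul]
    push_cast
    rw [Real.norm_eq_abs, div_pow, sq_abs,
      show (2 : ℝ) * (#s * ((b - a) ^ 2 / 2 ^ 2)) = #s * (b - a) ^ 2 / 2 by ring,
      div_div_eq_mul_div]
    ring
  rw [hparam] at hupper hlower
  calc μ.real {ω | ε ≤ |∑ i ∈ s, (X i ω - μ[X i])|}
      ≤ μ.real ({ω | ε ≤ ∑ i ∈ s, (X i ω - μ[X i])} ∪
          {ω | ε ≤ ∑ i ∈ s, -(X i ω - μ[X i])}) := by
        refine measureReal_mono fun ω hω => ?_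
        simp only [Set.mem_ofPred_eq, Set.mem_union, sum_neg_distrib] at hω ⊢
        rcases le_abs'.mp hω with h | h
        · exact Or.inr (by linarith)
        · exact Or.inl h
    _ ≤ _ := measureReal_union_le _ _
    _ ≤ _ := by linarith

variable {B n : ℕ} {X : Fin B × Fin n → Ω → ℝ} {θ : Fin B → ℝ}

lemma measureReal_le_abs_sub_binEst_le (hn : 0 < n) (hind : iIndepFun X μ)
    (hXm : ∀ p, Measurable (X p)) (hX : ∀ p, ∀ᵐ ω ∂μ, X p ω ∈ Set.Icc 0 1)
    (hmean : ∀ t s, μ[X (t, s)] = θ t) (t : Fin B) {ε : ℝ} (hε : 0 ≤ ε) :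
    μ.real {ω | ε ≤ |θ t - binEst X t ω|} ≤ 2 * exp (-2 * n * ε ^ 2) := by
  have hn' : (0 : ℝ) < n := Nat.cast_pos.mpr hn
  have hbin := measureReal_le_abs_sum_sub_integral_le_of_iIndepFun
    (hind.precomp (Prod.mk_right_injective t)) (fun s => hXm (t, s)) (fun s => hX (t, s)) univ
    (mul_nonneg hn'.le hε)
  simp only [hmean, card_univ, Fintype.card_fin, sub_zero, one_pow, mul_one] at hbin
  have hsum : ∀ ω, θ t - binEst X t ω = -(n : ℝ)⁻¹ * ∑ s : Fin n, (X (t, s) ω - θ t) := fun ω => by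
    rw [binEst, sum_sub_distrib, sum_const, card_univ, Fintype.card_fin, nsmul_eq_mul]
    field_simp
    ring
  calc μ.real {ω | ε ≤ |θ t - binEst X t ω|}
      ≤ μ.real {ω | n * ε ≤ |∑ s : Fin n, (X (t, s) ω - θ t)|} := by
        refine measureReal_mono fun ω hω => ?_
        simp only [Set.mem_ofPred_eq, hsum, abs_mul, abs_neg, abs_inv, Nat.abs_cast] at hω ⊢
        rwa [inv_mul_eq_div, le_div_iff₀ hn', mul_comm] at hω
    _ ≤ 2 * exp (-2 * (n * ε) ^ 2 / n) := hbin
    _ = 2 * exp (-2 * n * ε ^ 2) := by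
        congr 2
        field_simp

lemma one_sub_le_measureReal_forall_abs_sub_binEst_lt (hn : 0 < n) (hind : iIndepFun X μ)
    (hXm : ∀ p, Measurable (X p)) (hX : ∀ p, ∀ᵐ ω ∂μ, X p ω ∈ Set.Icc 0 1)
    (hmean : ∀ t s, μ[X (t, s)] = θ t) {ε : ℝ} (hε : 0 ≤ ε) :
    1 - 2 * B * exp (-2 * n * ε ^ 2) ≤ μ.real {ω | ∀ t, |θ t - binEst X t ω| < ε} := by
  set good := {ω | ∀ t, |θ t - binEst X t ω| < ε}
  have hbad : μ.real goodᶜ ≤ 2 * B * exp (-2 * n * ε ^ 2) :=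
    calc μ.real goodᶜ ≤ μ.real (⋃ t, {ω | ε ≤ |θ t - binEst X t ω|}) :=
          measureReal_mono fun ω hω => by simpa [good] using hω
      _ ≤ ∑ t, μ.real {ω | ε ≤ |θ t - binEst X t ω|} := measureReal_iUnion_fintype_le _
      _ ≤ ∑ _t : Fin B, 2 * exp (-2 * n * ε ^ 2) := sum_le_sum fun t _ =>
          measureReal_le_abs_sub_binEst_le hn hind hXm hX hmean t hε
      _ = 2 * B * exp (-2 * n * ε ^ 2) := by simp [mul_assoc, mul_left_comm]
  have hcover := measureReal_union_le (μ := μ) good goodᶜ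
  rw [Set.union_compl_self, probReal_univ] at hcover
  linarith

end Hoeffding

lemma sqrt_log_div_le_mul_sqrt {δ : ℝ} (hδ0 : 0 < δ) (hδ2 : δ ≤ 2) {B n : ℝ} (hB : 2 ≤ B)
    (hn : 0 < n) :
    √(log (2 * B / δ) / (2 * n)) ≤
      √(1 + log (2 / δ) / log 2) * √(B * log B / (n * B)) := by
  have hlog2 : 0 < log 2 := log_pos one_lt_two
  have hlogB : log 2 ≤ log B := log_le_log two_pos hB
  have hlogδ : 0 ≤ log (2 / δ) := log_nonneg ((one_le_div hδ0).mpr hδ2)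
  rw [← sqrt_mul (by positivity), show B * log B / (n * B) = log B / n by field_simp]
  refine sqrt_le_sqrt ?_
  rw [show 2 * B / δ = 2 / δ * B by ring, log_mul (by positivity) (by positivity),
    div_le_iff₀ (by positivity)]
  have hscale : log (2 / δ) ≤ log (2 / δ) / log 2 * log B := by
    rw [div_mul_eq_mul_div, le_div_iff₀ hlog2]
    exact mul_le_mul_of_nonneg_left hlogB hlogδ
  calc log (2 / δ) + log B ≤ 2 * (log B + log (2 / δ) / log 2 * log B) := by
        nlinarith
    _ = (1 + log (2 / δ) / log 2) * (log B / n) * (2 * n) := by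
        field_simp

/-- **MCE convergence rate**: for every `δ ∈ (0,1)` there is a constant `C > 0` depending only
on `δ` such that for all `B ≥ 2`, `n ≥ 1` (with `N = nB`) and every histogram-binning model,
with probability at least `1 − δ` we have `MCE ≤ C·√(B·log B / N)`. -/
theorem mce_rate (δ : ℝ) (hδ0 : 0 < δ) (hδ1 : δ < 1) :
    ∃ C : ℝ, 0 < C ∧
      ∀ (B n : ℕ), 2 ≤ B → 1 ≤ n →
      ∀ (Ω : Type) (_ : MeasurableSpace Ω) (μ : Measure Ω), IsProbabilityMeasure μ →
      ∀ (θ : Fin B → ℝ), (∀ t, θ t ∈ Set.Icc (0 : ℝ) 1) →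
      ∀ (X : Fin B × Fin n → Ω → ℝ),
        (∀ p ω, X p ω = 0 ∨ X p ω = 1) →
        (∀ p, Measurable (X p)) →
        iIndepFun X μ →
        (∀ t s, ∫ ω, X (t, s) ω ∂μ = θ t) →
      ∀ (J : ℕ) (g : Fin B → Fin J), Function.Surjective g →
      ∀ (α : Fin B → ℝ), (∀ t, 0 < α t) →
        ENNReal.ofReal (1 - δ) ≤
          μ {ω | MCE g α θ X ω ≤ C * Real.sqrt (B * Real.log B / (n * B : ℝ))} := by
  have hδ2 : δ ≤ 2 := by linarith
  have hlogδ : 0 ≤ log (2 / δ) := log_nonneg ((one_le_div hδ0).mpr hδ2)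
  refine ⟨√(1 + log (2 / δ) / log 2), sqrt_pos.mpr (by positivity), ?_⟩
  intro B n hB hn Ω _ μ _ θ _ X h01 hXm hind hmean J g _ α hα
  have hB' : (2 : ℝ) ≤ B := by exact_mod_cast hB
  have hn' : (0 : ℝ) < n := by exact_mod_cast hn
  have hX : ∀ p, ∀ᵐ ω ∂μ, X p ω ∈ Set.Icc (0 : ℝ) 1 := fun p =>
    ae_of_all _ fun ω => by rcases h01 p ω with h | h <;> simp [h]
  set ε := √(log (2 * B / δ) / (2 * n))
  have htail : 2 * B * exp (-2 * n * ε ^ 2) = δ := by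
    have hlog : 0 ≤ log (2 * B / δ) := log_nonneg ((one_le_div hδ0).mpr (by linarith))
    rw [sq_sqrt (by positivity), show -2 * n * (log (2 * B / δ) / (2 * n)) = -log (2 * B / δ) by
      field_simp, exp_neg, exp_log (by positivity)]
    field_simp
  rw [ENNReal.ofReal_le_iff_le_toReal (measure_ne_top _ _)]
  calc 1 - δ = 1 - 2 * B * exp (-2 * n * ε ^ 2) := by rw [htail]
    _ ≤ μ.real {ω | ∀ t, |θ t - binEst X t ω| < ε} :=
      one_sub_le_measureReal_forall_abs_sub_binEst_lt hn hind hXm hX hmean (sqrt_nonneg _)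
    _ ≤ _ := measureReal_mono fun ω hω => MCE_le g (fun t => (hα t).le) θ X ω
      (mul_nonneg (sqrt_nonneg _) (sqrt_nonneg _))
      fun t => (hω t).le.trans (sqrt_log_div_le_mul_sqrt hδ0 hδ2 hB' hn')
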